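/- arXiv:2006.15630 — 2 statements merged into one kernel-verified Lean document; each statement's English description precedes it below -/
import Mathlib

section
/- Let G be a connected acyclic simple graph in which every vertex has countably infinite degree, and let a, b be adjacent vertices of G. Then the set { f a | f is a graph automorphism of G with f b = b } is infinite. -/
/-!
Root the tree at `b`. Every vertex has exactly `ℵ₀` children, so enumerating the children of each
vertex by `ℕ` identifies the tree with the tree of finite sequences of naturals, by an isomorphism
sending the empty sequence to `b` and `[n]` to the `n`-th child of `b`. Two such identifications,
whose enumerations of the children of `b` start with `a` and with another neighbour `c`, compose to
an automorphism fixing `b` and sending `a` to `c`. Hence the orbit of `a` contains every neighbour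
of `b`.
-/

namespace SimpleGraph

variable {V : Type*} {G : SimpleGraph V}

lemma IsAcyclic.eq_of_adj_of_dist_add_one_eq (hG : G.IsAcyclic) {r u u' w : V}
    (hu : G.Adj u w) (hu' : G.Adj u' w) (hd : G.dist r u + 1 = G.dist r w)
    (hd' : G.dist r u' + 1 = G.dist r w) : u = u' := by
  have hw : G.Reachable r w := Reachable.of_dist_ne_zero (by omega)
  have isPath_concat {x : V} (hx : G.Adj x w) (hdx : G.dist r x + 1 = G.dist r w) :
      ∃ q : G.Walk r x, (q.concat hx).IsPath := by
    obtain ⟨q, -, hq⟩ := (hw.trans hx.symm.reachable).exists_path_of_dist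
    exact ⟨q, (q.concat hx).isPath_of_length_eq_dist (by simp [hq, hdx])⟩
  obtain ⟨p, hp⟩ := isPath_concat hu hd
  obtain ⟨p', hp'⟩ := isPath_concat hu' hd'
  exact (Walk.concat_inj (congrArg Subtype.val ((hG.subsingleton_path r w).elim ⟨_, hp⟩ ⟨_, hp'⟩))).1

lemma Reachable.exists_adj_dist_add_one_eq {r v : V} (h : G.Reachable r v) (hne : r ≠ v) :
    ∃ u, G.Adj u v ∧ G.dist r u + 1 = G.dist r v := by
  obtain ⟨p, -, hp⟩ := h.exists_path_of_dist
  have hnil : ¬p.Nil := Walk.not_nil_of_ne hne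
  refine ⟨p.penultimate, p.adj_penultimate hnil, ?_⟩
  have hle : G.dist r p.penultimate ≤ p.dropLast.length := dist_le _
  have hlen := Walk.length_dropLast_add_one hnil
  rcases (p.adj_penultimate hnil).diff_dist_adj (u := r) with h | h | h <;> omega

def children (G : SimpleGraph V) (r v : V) : Set V :=
  {w | G.Adj v w ∧ G.dist r v < G.dist r w}

lemma children_self (r : V) : G.children r r = G.neighborSet r := by
  ext w
  simp only [children, dist_self, Set.mem_ofPred_eq, mem_neighborSet, and_iff_left_iff_imp]
  exact fun h => h.reachable.pos_dist_of_ne h.ne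

lemma IsTree.children_infinite (hG : G.IsTree) (r : V) {v : V}
    (hv : (G.neighborSet v).Infinite) : (G.children r v).Infinite := by
  have hparent : {u | G.Adj u v ∧ G.dist r u + 1 = G.dist r v}.Subsingleton :=
    fun u hu u' hu' => hG.isAcyclic.eq_of_adj_of_dist_add_one_eq hu.1 hu'.1 hu.2 hu'.2
  refine (hv.sdiff hparent.finite).mono ?_
  rintro w ⟨hw, hwp⟩
  refine ⟨hw, ?_⟩
  rcases hG.dist_eq_dist_add_one_of_adj r hw with h | h
  · exact absurd ⟨hw.symm, h.symm⟩ hwp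
  · omega

lemma IsTree.exists_equiv_children_apply_zero (hG : G.IsTree)
    (hcount : ∀ v, Countable (G.neighborSet v)) (hinf : ∀ v, Infinite (G.neighborSet v))
    {r c : V} (hc : c ∈ G.children r r) :
    ∃ e : ∀ v, ℕ ≃ G.children r v, (e r 0 : V) = c := by
  classical
  have enum (v : V) : Nonempty (ℕ ≃ G.children r v) :=
    have : Countable (G.children r v) :=
      ((Set.countable_coe_iff.mp (hcount v)).mono fun _ hw => hw.1).to_subtype
    have : Infinite (G.children r v) :=
      (hG.children_infinite r (Set.infinite_coe_iff.mp (hinf v))).to_subtype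
    nonempty_equiv_of_countable
  let e₀ v := (enum v).some
  refine ⟨Function.update e₀ r ((e₀ r).trans (Equiv.swap (e₀ r 0) ⟨c, hc⟩)), ?_⟩
  simp

/-- `n :: l` is the `n`-th child of `l`, and `[]` is the root. -/
def addressTree : SimpleGraph (List ℕ) := fromRel fun l m => ∃ n, m = n :: l

section Descend

variable {r : V} (e : ∀ v, ℕ ≃ G.children r v)

def descend : List ℕ → V
  | [] => r
  | n :: l => e (descend l) n

@[simp] lemma descend_nil : descend e [] = r := rfl

@[simp] lemma descend_cons (n : ℕ) (l : List ℕ) : descend e (n :: l) = e (descend e l) n := rfl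

lemma adj_descend_cons (n : ℕ) (l : List ℕ) : G.Adj (descend e l) (descend e (n :: l)) :=
  (e (descend e l) n).2.1

lemma dist_descend (l : List ℕ) : G.dist r (descend e l) = l.length := by
  induction l with
  | nil => simp
  | cons n l ih =>
    have hlt : G.dist r (descend e l) < G.dist r (descend e (n :: l)) := (e (descend e l) n).2.2
    rw [List.length_cons]
    rcases (adj_descend_cons e n l).diff_dist_adj (u := r) with h | h | h <;> omega

lemma dist_descend_add_one (n : ℕ) (l : List ℕ) :
    G.dist r (descend e l) + 1 = G.dist r (descend e (n :: l)) := by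
  simp only [dist_descend, List.length_cons]

lemma IsAcyclic.descend_injective (hG : G.IsAcyclic) : Function.Injective (descend e) := by
  intro l
  induction l with
  | nil =>
    intro m h
    have := dist_descend e m
    rw [← h, descend_nil, dist_self] at this
    exact (List.eq_nil_of_length_eq_zero this.symm).symm
  | cons n l ih =>
    intro m h
    cases m with
    | nil => simpa [h] using dist_descend e (n :: l)
    | cons n' m =>
      obtain rfl : l = m := ih <| hG.eq_of_adj_of_dist_add_one_eq (adj_descend_cons e n l)
        (h ▸ adj_descend_cons e n' m) (dist_descend_add_one e n l) (h ▸ dist_descend_add_one e n' m)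
      simpa using (e (descend e l)).injective (Subtype.ext h)

lemma IsAcyclic.exists_eq_cons_of_adj_descend (hG : G.IsAcyclic) {l m : List ℕ}
    (hadj : G.Adj (descend e l) (descend e m)) (hlen : l.length + 1 = m.length) :
    ∃ n, m = n :: l := by
  cases m with
  | nil => simp at hlen
  | cons n m =>
    refine ⟨n, congrArg _ (hG.descend_injective e ?_)⟩
    exact hG.eq_of_adj_of_dist_add_one_eq (adj_descend_cons e n m) hadj
      (dist_descend_add_one e n m) (by rw [dist_descend, dist_descend, hlen])

lemma IsTree.adj_descend_iff (hG : G.IsTree) {l m : List ℕ} :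
    G.Adj (descend e l) (descend e m) ↔ addressTree.Adj l m := by
  rw [addressTree, fromRel_adj]
  constructor
  · intro h
    refine ⟨fun hlm => h.ne (congrArg _ hlm), ?_⟩
    rcases hG.dist_eq_dist_add_one_of_adj r h with hd | hd <;> simp only [dist_descend] at hd
    · exact Or.inr (hG.isAcyclic.exists_eq_cons_of_adj_descend e h.symm hd.symm)
    · exact Or.inl (hG.isAcyclic.exists_eq_cons_of_adj_descend e h hd.symm)
  · rintro ⟨-, ⟨n, rfl⟩ | ⟨n, rfl⟩⟩
    · exact adj_descend_cons e n l
    · exact (adj_descend_cons e n m).symm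

lemma Connected.descend_surjective (hG : G.Connected) : Function.Surjective (descend e) := by
  suffices ∀ k v, G.dist r v = k → ∃ l, descend e l = v from fun v => this _ v rfl
  intro k
  induction k with
  | zero => exact fun v hv => ⟨[], hG.dist_eq_zero_iff.mp hv⟩
  | succ k ih =>
    intro v hv
    obtain ⟨u, hu, hdu⟩ := (hG r v).exists_adj_dist_add_one_eq (by rintro rfl; simp at hv)
    obtain ⟨l, rfl⟩ := ih u (by omega)
    exact ⟨(e (descend e l)).symm ⟨v, hu, by omega⟩ :: l, by simp⟩

noncomputable def IsTree.descendIso (hG : G.IsTree) : addressTree ≃g G where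
  toEquiv := .ofBijective (descend e)
    ⟨hG.isAcyclic.descend_injective e, hG.connected.descend_surjective e⟩
  map_rel_iff' := hG.adj_descend_iff e

end Descend

theorem IsTree.exists_iso_fixing_apply_eq_of_adj (hG : G.IsTree)
    (hcount : ∀ v, Countable (G.neighborSet v)) (hinf : ∀ v, Infinite (G.neighborSet v))
    {r a c : V} (ha : G.Adj r a) (hc : G.Adj r c) : ∃ f : G ≃g G, f r = r ∧ f a = c := by
  obtain ⟨e, he⟩ := hG.exists_equiv_children_apply_zero hcount hinf (c := a)
    (by rwa [children_self])
  obtain ⟨e', he'⟩ := hG.exists_equiv_children_apply_zero hcount hinf (c := c)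
    (by rwa [children_self])
  have hr₀ : (hG.descendIso e).symm r = [] := (hG.descendIso e).symm_apply_eq.mpr rfl
  have ha₀ : (hG.descendIso e).symm a = [0] := (hG.descendIso e).symm_apply_eq.mpr he.symm
  refine ⟨(hG.descendIso e).symm.trans (hG.descendIso e'), ?_, ?_⟩
  · rw [RelIso.trans_apply, hr₀]
    rfl
  · rw [RelIso.trans_apply, ha₀]
    exact he'

end SimpleGraph

/-- In a connected acyclic simple graph all of whose vertices have countably infinite
degree, for adjacent vertices `a`, `b`, the orbit of `a` under automorphisms fixing `b`
is infinite. -/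
theorem tree_orbit_over_neighbor_infinite {V : Type*} (G : SimpleGraph V)
    (hconn : G.Connected) (hacyc : G.IsAcyclic)
    (hdeg : ∀ v : V, Countable (G.neighborSet v) ∧ Infinite (G.neighborSet v))
    (a b : V) (hab : G.Adj a b) :
    {x : V | ∃ f : G ≃g G, f b = b ∧ f a = x}.Infinite :=
  (Set.infinite_coe_iff.mp (hdeg b).2).mono fun _ hc =>
    SimpleGraph.IsTree.exists_iso_fixing_apply_eq_of_adj ⟨hconn, hacyc⟩ (fun v => (hdeg v).1)
      (fun v => (hdeg v).2) hab.symm hc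
end

section
/- Let G be a connected acyclic simple graph in which every vertex has countably infinite degree. Let a be a vertex and S a finite set of vertices. If the orbit { f a | f is a graph automorphism of G fixing every element of S } is infinite, then there exists a vertex b adjacent to a such that the orbit { f a | f is a graph automorphism of G fixing b and every element of S } is infinite. -/
/-!
If `a ∈ S`, or two vertices of `S` are reached from `a` through different neighbours, then `a`
lies on the path between two fixed vertices and is fixed, so its orbit is finite. Otherwise every
vertex of `S` is reached from `a` through one neighbour `b`. A tree all of whose degrees are
`ℵ₀` is isomorphic to the tree of finite sequences of natural numbers, with `b` sent to the
empty sequence. In these coordinates `a = [m]` and no vertex of `S` starts with `m`; for each `k`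
that is not the first entry of a vertex of `S`, exchanging the first entries `m` and `k` is an
automorphism fixing `b` and `S` and sending `a` to `[k]`.
-/

namespace SimpleGraph

variable {V W : Type*} {G : SimpleGraph V} {H : SimpleGraph W}

lemma Iso.edist_le (e : G ≃g H) (u v : V) : H.edist (e u) (e v) ≤ G.edist u v :=
  le_iInf fun p => (SimpleGraph.edist_le (p.map e.toHom)).trans (by simp)

lemma Iso.dist_eq (e : G ≃g H) (u v : V) : H.dist (e u) (e v) = G.dist u v :=
  congrArg ENat.toNat <| (e.edist_le u v).antisymm (by simpa using e.symm.edist_le (e u) (e v))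

lemma Walk.notMem_support_of_length_lt_dist [DecidableEq V] {u v w : V} (p : G.Walk u w)
    (hp : p.length < G.dist u v) : v ∉ p.support := fun hv =>
  (((dist_le _).trans (p.length_takeUntil_le_length hv)).trans_lt hp).false

lemma Reachable.exists_adj_dist_add_one {u v : V} (h : G.Reachable u v) (hne : u ≠ v) :
    ∃ w, G.Adj u w ∧ G.dist w v + 1 = G.dist u v := by
  obtain ⟨p, -, hp⟩ := h.exists_path_of_dist
  obtain ⟨w, huw, q, rfl⟩ := Walk.exists_eq_cons_of_ne hne p
  refine ⟨w, huw, le_antisymm ?_ ?_⟩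
  · simpa [← hp] using dist_le q
  · simpa [dist_eq_one_iff_adj.2 huw, add_comm] using q.reachable.dist_triangle_right u

namespace IsTree

lemma eq_of_adj_of_dist_add_one (hT : G.IsTree) {r u u' v : V} (hu : G.Adj u v)
    (hu' : G.Adj u' v) (hd : G.dist r u + 1 = G.dist r v) (hd' : G.dist r u' + 1 = G.dist r v) :
    u = u' := by
  classical
  obtain ⟨p, hp, hpl⟩ := hT.connected.exists_path_of_dist r u
  obtain ⟨p', hp', hpl'⟩ := hT.connected.exists_path_of_dist r u'
  have h := hT.isAcyclic.subsingleton_path r v |>.elim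
    ⟨_, hp.concat (p.notMem_support_of_length_lt_dist (by omega)) hu⟩
    ⟨_, hp'.concat (p'.notMem_support_of_length_lt_dist (by omega)) hu'⟩
  exact (Walk.concat_inj (congrArg Subtype.val h)).1

lemma dist_eq_add_one_of_adj_of_ne (hT : G.IsTree) {r u v w : V} (huv : G.Adj u v)
    (hvw : G.Adj v w) (hwu : w ≠ u) (hd : G.dist r v = G.dist r u + 1) :
    G.dist r w = G.dist r v + 1 :=
  (hT.dist_eq_dist_add_one_of_adj r hvw).resolve_left fun h =>
    hwu (hT.eq_of_adj_of_dist_add_one hvw.symm huv h.symm hd.symm)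

lemma dist_eq_add_length_of_isPath (hT : G.IsTree) {r u v : V} {p : G.Walk u v}
    (hp : p.IsPath) (hd : G.dist r p.snd = G.dist r u + 1) :
    G.dist r v = G.dist r u + p.length := by
  induction p with
  | nil => rfl
  | @cons u w v huw q ih =>
    rw [Walk.cons_isPath_iff] at hp
    rw [Walk.snd_cons] at hd
    cases q with
    | nil => simpa using hd
    | @cons _ x _ hwx q =>
      have hx := hT.dist_eq_add_one_of_adj_of_ne huw hwx (fun h => hp.2 (by subst h; simp)) hd
      rw [ih hp.1 (by rwa [Walk.snd_cons])]
      simp only [Walk.length_cons]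
      omega

lemma eq_of_dist_add_dist_eq (hT : G.IsTree) {s t x y : V}
    (hx : G.dist s x + G.dist x t = G.dist s t) (hy : G.dist s y + G.dist y t = G.dist s t)
    (hxy : G.dist s x = G.dist s y) : x = y := by
  obtain ⟨p, hp⟩ := hT.connected.exists_walk_length_eq_dist s x
  obtain ⟨q, hq⟩ := hT.connected.exists_walk_length_eq_dist x t
  obtain ⟨p', hp'⟩ := hT.connected.exists_walk_length_eq_dist s y
  obtain ⟨q', hq'⟩ := hT.connected.exists_walk_length_eq_dist y t
  have hP := (p.append q).isPath_of_length_eq_dist (by simp [hp, hq, hx])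
  have hP' := (p'.append q').isPath_of_length_eq_dist (by simp [hp', hq', hy])
  have h := congrArg Subtype.val <|
    hT.isAcyclic.subsingleton_path s t |>.elim ⟨_, hP⟩ ⟨_, hP'⟩
  simpa [Walk.getVert_append, hp, hp', hxy] using congrArg (·.getVert (G.dist s x)) h

lemma apply_eq_of_dist_add_dist_eq (hT : G.IsTree) (f : G ≃g G) {s t x : V} (hs : f s = s)
    (ht : f t = t) (hx : G.dist s x + G.dist x t = G.dist s t) : f x = x := by
  have hsx : G.dist s (f x) = G.dist s x := by simpa [hs] using f.dist_eq s x
  have hxt : G.dist (f x) t = G.dist x t := by simpa [ht] using f.dist_eq x t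
  exact hT.eq_of_dist_add_dist_eq (by rwa [hsx, hxt]) hx hsx

lemma dist_add_dist_eq_of_adj (hT : G.IsTree) {a s t y z : V} (hy : G.Adj a y) (hz : G.Adj a z)
    (hyz : y ≠ z) (hys : G.dist y s + 1 = G.dist a s) (hzt : G.dist z t + 1 = G.dist a t) :
    G.dist s a + G.dist a t = G.dist s t := by
  obtain ⟨q, hq⟩ := hT.connected.exists_walk_length_eq_dist z t
  have hpath := (Walk.cons hz q).isPath_of_length_eq_dist (by simp [hq, hzt])
  have hsz : G.dist s z = G.dist s a + 1 := by
    refine hT.dist_eq_add_one_of_adj_of_ne hy.symm hz hyz.symm ?_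
    rw [dist_comm, ← hys, dist_comm]
  rw [hT.dist_eq_add_length_of_isPath (r := s) hpath (by simpa using hsz)]
  simp [hq, hzt]

end IsTree

def fixingOrbit (G : SimpleGraph V) (T : Set V) (a : V) : Set V :=
  {x | ∃ f : G ≃g G, (∀ t ∈ T, f t = t) ∧ f a = x}

lemma fixingOrbit_insert (b : V) (T : Set V) (a : V) :
    G.fixingOrbit (insert b T) a =
      {x | ∃ f : G ≃g G, f b = b ∧ (∀ t ∈ T, f t = t) ∧ f a = x} := by
  simp [fixingOrbit, and_assoc]

lemma finite_fixingOrbit {T : Set V} {a : V}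
    (h : ∀ f : G ≃g G, (∀ t ∈ T, f t = t) → f a = a) : (G.fixingOrbit T a).Finite :=
  (Set.finite_singleton a).subset <| by rintro _ ⟨f, hf, rfl⟩; exact h f hf

lemma Iso.image_fixingOrbit_subset (e : H ≃g G) (T : Set W) (a : W) :
    e '' H.fixingOrbit T a ⊆ G.fixingOrbit (e '' T) (e a) := by
  rintro _ ⟨_, ⟨f, hf, rfl⟩, rfl⟩
  refine ⟨e.symm.trans (f.trans e), ?_, by simp⟩
  rintro _ ⟨t, ht, rfl⟩
  simp [hf t ht]

/-- The tree `ℕ^{<ω}` of finite sequences of natural numbers. -/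
def listTree : SimpleGraph (List ℕ) where
  Adj l l' := (∃ n, l' = l ++ [n]) ∨ ∃ n, l = l' ++ [n]
  symm := ⟨fun _ _ => Or.symm⟩
  loopless := ⟨fun l h => by
    rcases h with ⟨n, h⟩ | ⟨n, h⟩ <;> simpa using congrArg List.length h⟩

lemma listTree_adj {l l' : List ℕ} :
    listTree.Adj l l' ↔ (∃ n, l' = l ++ [n]) ∨ ∃ n, l = l' ++ [n] := Iff.rfl

namespace listTree

lemma adj_modifyHead (f : ℕ → ℕ) {l l' : List ℕ} (h : listTree.Adj l l') :
    listTree.Adj (l.modifyHead f) (l'.modifyHead f) := by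
  rcases listTree_adj.1 h with ⟨n, rfl⟩ | ⟨n, rfl⟩
  · rcases l with _ | ⟨i, t⟩
    · exact Or.inl ⟨f n, rfl⟩
    · exact Or.inl ⟨n, rfl⟩
  · rcases l' with _ | ⟨i, t⟩
    · exact Or.inr ⟨f n, rfl⟩
    · exact Or.inr ⟨n, rfl⟩

def permHead (π : Equiv.Perm ℕ) : listTree ≃g listTree where
  toFun := List.modifyHead π
  invFun := List.modifyHead π.symm
  left_inv l := by simp
  right_inv l := by simp
  map_rel_iff' := ⟨fun h => by simpa using adj_modifyHead π.symm h, adj_modifyHead π⟩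

lemma length_le_length_add_length {l l' : List ℕ} (p : listTree.Walk l l') :
    l'.length ≤ l.length + p.length := by
  induction p with
  | nil => simp
  | cons h p ih =>
    rcases listTree_adj.1 h with ⟨n, rfl⟩ | ⟨n, rfl⟩ <;>
      simp only [List.length_append, List.length_cons, List.length_nil, zero_add,
        Walk.length_cons] at ih ⊢ <;>
      omega

lemma exists_walk_append (l t : List ℕ) :
    ∃ p : listTree.Walk l (l ++ t), p.length = t.length := by
  induction t generalizing l with
  | nil => exact ⟨Walk.nil.copy rfl (by simp), by simp⟩
  | cons n t ih =>
    obtain ⟨p, hp⟩ := ih (l ++ [n])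
    exact ⟨.cons (listTree_adj.2 (.inl ⟨n, rfl⟩)) (p.copy rfl (by simp)), by simp [hp]⟩

lemma dist_append (l t : List ℕ) : listTree.dist l (l ++ t) = t.length := by
  obtain ⟨p, hp⟩ := exists_walk_append l t
  obtain ⟨q, hq⟩ := p.reachable.exists_walk_length_eq_dist
  have := length_le_length_add_length q
  have := dist_le p
  simp only [List.length_append] at *
  omega

lemma infinite_fixingOrbit_singleton {T : Set (List ℕ)} (hT : T.Finite) {m : ℕ}
    (hm : ∀ l ∈ T, l.head? ≠ some m) : (listTree.fixingOrbit T [m]).Infinite := by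
  have hK : {k : ℕ | some k ∉ List.head? '' T}.Infinite :=
    ((hT.image _).preimage (Option.some_injective _).injOn).infinite_compl
  refine ((hK.image List.singleton_injective.injOn)).mono ?_
  rintro _ ⟨k, hk, rfl⟩
  refine ⟨permHead (Equiv.swap m k), fun l hl => ?_, by simp [permHead]⟩
  rcases l with _ | ⟨i, t⟩
  · rfl
  · have him : i ≠ m := fun h => hm _ hl (by simp [h])
    have hik : i ≠ k := fun h => hk ⟨_, hl, by simp [h]⟩
    simp [permHead, Equiv.swap_apply_of_ne_of_ne him hik]

end listTree

section Coordinates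

variable (hdeg : ∀ v, Countable (G.neighborSet v) ∧ Infinite (G.neighborSet v))

variable (G) in
def childSet (v : V) (p : Option V) : Set V := G.neighborSet v \ p.toFinset

noncomputable def childEquiv (v : V) (p : Option V) : ℕ ≃ G.childSet v p :=
  have : Countable (G.childSet v p) :=
    ((Set.countable_coe_iff.1 (hdeg v).1).mono Set.sdiff_subset).to_subtype
  have : Infinite (G.childSet v p) :=
    ((Set.infinite_coe_iff.1 (hdeg v).2).sdiff p.toFinset.finite_toSet).to_subtype
  (nonempty_denumerable (G.childSet v p)).some.eqv.symm

/-- The vertex reached from `r` by taking, for each entry `n` of `l` in turn, the `n`-th neighbour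
other than the vertex we came from, paired with that previous vertex. -/
noncomputable def coordState (r : V) (l : List ℕ) : Option V × V :=
  l.foldl (fun s n => (some s.2, childEquiv hdeg s.2 s.1 n)) (none, r)

noncomputable def coord (r : V) (l : List ℕ) : V := (coordState hdeg r l).2

variable {r : V}

lemma coordState_nil : coordState hdeg r [] = (none, r) := rfl

lemma coord_nil : coord hdeg r [] = r := rfl

lemma coordState_append (l : List ℕ) (n : ℕ) :
    coordState hdeg r (l ++ [n]) =
      (some (coord hdeg r l),
        (childEquiv hdeg (coord hdeg r l) (coordState hdeg r l).1 n : V)) := by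
  rw [coordState, List.foldl_append]
  rfl

lemma coord_append (l : List ℕ) (n : ℕ) :
    coord hdeg r (l ++ [n]) =
      (childEquiv hdeg (coord hdeg r l) (coordState hdeg r l).1 n : V) := by
  rw [coord, coordState_append]

lemma coord_append_mem (l : List ℕ) (n : ℕ) :
    coord hdeg r (l ++ [n]) ∈ G.childSet (coord hdeg r l) (coordState hdeg r l).1 := by
  rw [coord_append]
  exact Subtype.prop _

lemma adj_coord_append (l : List ℕ) (n : ℕ) :
    G.Adj (coord hdeg r l) (coord hdeg r (l ++ [n])) :=
  (coord_append_mem hdeg l n).1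

lemma coord_append_append_ne (l : List ℕ) (m n : ℕ) :
    coord hdeg r (l ++ [m] ++ [n]) ≠ coord hdeg r l := by
  have := (coord_append_mem hdeg (r := r) (l ++ [m]) n).2
  rw [coordState_append] at this
  simpa using this

lemma dist_coord (hT : G.IsTree) (l : List ℕ) : G.dist r (coord hdeg r l) = l.length := by
  rcases l.eq_nil_or_concat' with rfl | ⟨t, n, rfl⟩
  · simp [coord_nil]
  rcases t.eq_nil_or_concat' with rfl | ⟨t, m, rfl⟩
  · simpa [coord_nil] using dist_eq_one_iff_adj.2 (adj_coord_append hdeg [] n)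
  have ht := dist_coord hT t
  have htm := dist_coord hT (t ++ [m])
  rw [hT.dist_eq_add_one_of_adj_of_ne (adj_coord_append hdeg t m)
    (adj_coord_append hdeg (t ++ [m]) n) (coord_append_append_ne hdeg t m n) (by simp_all), htm]
  simp
termination_by l.length

lemma dist_of_mem_coordState_fst (hT : G.IsTree) {l : List ℕ} {p : V}
    (hp : p ∈ (coordState hdeg r l).1) : G.dist r p + 1 = l.length := by
  rcases l.eq_nil_or_concat' with rfl | ⟨t, n, rfl⟩
  · simp [coordState_nil] at hp
  rw [coordState_append, Option.mem_some_iff] at hp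
  simp [← hp, dist_coord hdeg hT]

lemma eq_coord_of_adj (hT : G.IsTree) {t : List ℕ} {n : ℕ} {u : V}
    (hu : G.Adj u (coord hdeg r (t ++ [n]))) (hd : G.dist r u = t.length) : u = coord hdeg r t :=
  hT.eq_of_adj_of_dist_add_one (r := r) hu (adj_coord_append hdeg t n)
    (by simp [hd, dist_coord hdeg hT]) (by simp [dist_coord hdeg hT])

lemma coord_injective (hT : G.IsTree) : Function.Injective (coord hdeg r) := by
  intro l₁ l₂ h
  have hlen : l₁.length = l₂.length := by rw [← dist_coord hdeg hT, h, dist_coord hdeg hT]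
  induction l₁ using List.reverseRecOn generalizing l₂ with
  | nil => exact (List.length_eq_zero_iff.1 hlen.symm).symm
  | append_singleton t₁ n₁ ih =>
    rcases l₂.eq_nil_or_concat' with rfl | ⟨t₂, n₂, rfl⟩
    · simp at hlen
    have ht : coord hdeg r t₁ = coord hdeg r t₂ :=
      eq_coord_of_adj hdeg hT (h ▸ adj_coord_append hdeg t₁ n₁)
        (by simpa [dist_coord hdeg hT] using hlen)
    obtain rfl := ih ht (by simpa using hlen)
    rw [coord_append, coord_append] at h
    rw [(childEquiv hdeg _ _).injective (Subtype.val_injective h)]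

lemma coord_surjective (hT : G.IsTree) : Function.Surjective (coord hdeg r) := by
  intro v
  induction hk : G.dist r v generalizing v with
  | zero => exact ⟨[], (hT.connected.dist_eq_zero_iff.1 hk)⟩
  | succ k ih =>
    have hrv : r ≠ v := by rintro rfl; simp at hk
    obtain ⟨u, hvu, hu⟩ := (hT.connected v r).exists_adj_dist_add_one hrv.symm
    rw [dist_comm (u := u), dist_comm (u := v), hk] at hu
    obtain ⟨t, rfl⟩ := ih u (by omega)
    have hlen : t.length = k := by rw [dist_coord hdeg hT] at hu; omega
    have hmem : v ∈ G.childSet (coord hdeg r t) (coordState hdeg r t).1 := by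
      refine ⟨hvu.symm, fun hp => ?_⟩
      have := dist_of_mem_coordState_fst hdeg hT (Option.mem_toFinset.1 hp)
      omega
    exact ⟨t ++ [(childEquiv hdeg _ _).symm ⟨v, hmem⟩], by simp [coord_append]⟩

lemma exists_eq_append_of_adj_coord (hT : G.IsTree) {l l' : List ℕ}
    (h : G.Adj (coord hdeg r l) (coord hdeg r l')) (hlen : l.length + 1 = l'.length) :
    ∃ n, l' = l ++ [n] := by
  rcases l'.eq_nil_or_concat' with rfl | ⟨t, n, rfl⟩
  · simp at hlen
  obtain rfl := coord_injective hdeg hT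
    (eq_coord_of_adj hdeg hT h (by simpa [dist_coord hdeg hT] using hlen))
  exact ⟨n, rfl⟩

lemma adj_coord_iff (hT : G.IsTree) {l l' : List ℕ} :
    G.Adj (coord hdeg r l) (coord hdeg r l') ↔ listTree.Adj l l' := by
  refine ⟨fun h => ?_, ?_⟩
  · rcases hT.dist_eq_dist_add_one_of_adj r h with hd | hd <;>
      rw [dist_coord hdeg hT, dist_coord hdeg hT] at hd
    · exact Or.inr (exists_eq_append_of_adj_coord hdeg hT h.symm hd.symm)
    · exact Or.inl (exists_eq_append_of_adj_coord hdeg hT h hd.symm)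
  · rintro (⟨n, rfl⟩ | ⟨n, rfl⟩)
    · exact adj_coord_append hdeg l n
    · exact (adj_coord_append hdeg l' n).symm

end Coordinates

lemma IsTree.exists_listTree_iso (hT : G.IsTree)
    (hdeg : ∀ v, Countable (G.neighborSet v) ∧ Infinite (G.neighborSet v)) (r : V) :
    ∃ e : listTree ≃g G, e [] = r :=
  ⟨{ toEquiv := .ofBijective _ ⟨coord_injective hdeg (r := r) hT, coord_surjective hdeg hT⟩
     map_rel_iff' := adj_coord_iff hdeg hT }, rfl⟩

lemma IsTree.infinite_fixingOrbit (hT : G.IsTree)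
    (hdeg : ∀ v, Countable (G.neighborSet v) ∧ Infinite (G.neighborSet v)) {a b : V}
    (hab : G.Adj a b) {S : Set V} (hS : S.Finite)
    (hSd : ∀ s ∈ S, G.dist b s + 1 = G.dist a s) : (G.fixingOrbit (insert b S) a).Infinite := by
  obtain ⟨e, rfl⟩ := hT.exists_listTree_iso hdeg b
  obtain ⟨m, hm⟩ : ∃ m, e.symm a = [m] := by
    rcases listTree_adj.1 (e.symm.map_adj_iff.2 hab.symm) with ⟨m, h⟩ | ⟨n, h⟩
    · exact ⟨m, by simpa using h⟩
    · simp at h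
  rw [e.symm_apply_eq] at hm
  subst hm
  -- a vertex `e (m :: t)` of `S` would be nearer to `e [m] = a` than to `e [] = b`
  have hhead : ∀ l ∈ e ⁻¹' insert (e []) S, l.head? ≠ some m := by
    rintro (_ | ⟨i, t⟩) hl h
    · simp at h
    obtain rfl : i = m := by simpa using h
    rcases hl with hl | hl
    · simpa using e.injective hl
    · have h₁ := listTree.dist_append [] (i :: t)
      have h₂ := listTree.dist_append [i] t
      have := hSd _ hl
      rw [e.dist_eq, e.dist_eq] at this
      simp only [List.nil_append, List.cons_append, List.length_cons] at h₁ h₂ this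
      omega
  have := listTree.infinite_fixingOrbit_singleton ((hS.insert _).preimage e.injective.injOn) hhead
  refine (this.image e.injective.injOn).mono ?_
  simpa [Set.image_preimage_eq _ e.surjective] using
    e.image_fixingOrbit_subset (e ⁻¹' insert (e []) S) [m]

end SimpleGraph

/-- In a connected acyclic simple graph all of whose vertices have countably infinite
degree: if the orbit of a vertex `a` under automorphisms fixing a finite set `S`
pointwise is infinite, then there is a neighbor `b` of `a` such that the orbit of `a`
under automorphisms fixing `b` and `S` pointwise is still infinite. -/
theorem tree_orbit_infinite_exists_neighbor {V : Type*} (G : SimpleGraph V)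
    (hconn : G.Connected) (hacyc : G.IsAcyclic)
    (hdeg : ∀ v : V, Countable (G.neighborSet v) ∧ Infinite (G.neighborSet v))
    (a : V) (S : Finset V)
    (horb : {x : V | ∃ f : G ≃g G, (∀ s ∈ S, f s = s) ∧ f a = x}.Infinite) :
    ∃ b : V, G.Adj a b ∧
      {x : V | ∃ f : G ≃g G, f b = b ∧ (∀ s ∈ S, f s = s) ∧ f a = x}.Infinite := by
  have hT : G.IsTree := ⟨hconn, hacyc⟩
  change (G.fixingOrbit S a).Infinite at horb
  have haS : a ∉ S := fun ha => horb (SimpleGraph.finite_fixingOrbit fun f hf => hf a ha)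
  obtain ⟨b, hab, hb⟩ : ∃ b, G.Adj a b ∧ ∀ s ∈ S, G.dist b s + 1 = G.dist a s := by
    rcases S.eq_empty_or_nonempty with rfl | ⟨s₀, hs₀⟩
    · obtain ⟨⟨b, hab⟩⟩ := @Infinite.nonempty _ (hdeg a).2
      exact ⟨b, hab, by simp⟩
    obtain ⟨b, hab, hb₀⟩ := (hconn a s₀).exists_adj_dist_add_one fun h => haS (h ▸ hs₀)
    refine ⟨b, hab, fun s hs => by_contra fun hbs => horb ?_⟩
    refine SimpleGraph.finite_fixingOrbit fun f hf => ?_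
    obtain ⟨y, hay, hy⟩ := (hconn a s).exists_adj_dist_add_one fun h => haS (h ▸ hs)
    -- `a` lies on the path between `s₀` and `s`, which `f` fixes pointwise
    exact hT.apply_eq_of_dist_add_dist_eq f (hf s₀ hs₀) (hf s hs)
      (hT.dist_add_dist_eq_of_adj hab hay (by rintro rfl; exact hbs hy) hb₀ hy)
  refine ⟨b, hab, ?_⟩
  simpa only [SimpleGraph.fixingOrbit_insert, Finset.mem_coe] using
    hT.infinite_fixingOrbit hdeg hab S.finite_toSet hb
end
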